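/- arXiv:2507.10907 — 3 statements merged into one kernel-verified Lean document; each statement's English description precedes it below -/
import Mathlib

section
/- Let G be a strongly topological gyrogroup with a symmetric neighborhood base μ at 0 (so that gyr[x,y](U) = U for all U ∈ μ and x, y ∈ G). If U ∈ μ and H is a compact subset of G, then there exists V ∈ μ such that (h ⊕ V) ⊞ (⊖h) ⊆ U for every h ∈ H. -/
universe u

class Gyrogroup (G : Type u) where
  add : G → G → G
  zero : G
  neg : G → G
  gyr : G → G → G → G
  zero_add : ∀ x, add zero x = x
  add_zero : ∀ x, add x zero = x
  neg_add : ∀ x, add (neg x) x = zero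
  add_neg : ∀ x, add x (neg x) = zero
  gyr_bij : ∀ x y, Function.Bijective (gyr x y)
  gyr_add : ∀ x y a b, gyr x y (add a b) = add (gyr x y a) (gyr x y b)
  left_assoc : ∀ x y z, add x (add y z) = add (add x y) (gyr x y z)
  loop : ∀ x y, gyr (add x y) y = gyr x y

namespace Gyrogroup

variable {G : Type u}

instance [Gyrogroup G] : Add G := ⟨Gyrogroup.add⟩
instance [Gyrogroup G] : Zero G := ⟨Gyrogroup.zero⟩
instance [Gyrogroup G] : Neg G := ⟨Gyrogroup.neg⟩

/-- The gyrogroup cooperation `x ⊞ y = x ⊕ gyr[x, ⊖y](y)`. -/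
def coadd [Gyrogroup G] (x y : G) : G := x + gyr x (-y) y

/-- `S` is a subgyrogroup: contains the identity and is closed under `⊕`, `⊖` and the
gyroautomorphisms. -/
def IsSubgyro [Gyrogroup G] (S : Set G) : Prop :=
  (0 : G) ∈ S ∧ (∀ ⦃a b : G⦄, a ∈ S → b ∈ S → a + b ∈ S) ∧
    (∀ ⦃a : G⦄, a ∈ S → -a ∈ S) ∧
    ∀ ⦃a b c : G⦄, a ∈ S → b ∈ S → c ∈ S → gyr a b c ∈ S

/-- The subgyrogroup generated by `A`. -/
def gen [Gyrogroup G] (A : Set G) : Set G := ⋂₀ {S : Set G | IsSubgyro S ∧ A ⊆ S}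

/-- `N` is a normal subgyrogroup: the kernel of a gyrogroup homomorphism. -/
def IsNormalSubgyro [Gyrogroup G] (N : Set G) : Prop :=
  ∃ (H : Type u) (i : Gyrogroup H) (f : G → H),
    (∀ a b : G, f (a + b) = i.add (f a) (f b)) ∧ N = f ⁻¹' {i.zero}

/-- A (Hausdorff) topological gyrogroup. -/
class TopGyrogroup (G : Type u) [Gyrogroup G] [TopologicalSpace G] : Prop where
  t2 : T2Space G
  continuous_add : Continuous fun p : G × G => p.1 + p.2
  continuous_neg : Continuous fun x : G => -x

/-- `μ` is a neighborhood base at `0` consisting of gyr-invariant sets. -/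
def IsGyroNhdBase [Gyrogroup G] [TopologicalSpace G] (μ : Set (Set G)) : Prop :=
  (∀ U ∈ μ, U ∈ nhds (0 : G)) ∧ (∀ W ∈ nhds (0 : G), ∃ U ∈ μ, U ⊆ W) ∧
    ∀ U ∈ μ, ∀ x y : G, gyr x y '' U = U

/-- A strongly topological gyrogroup: some neighborhood base at `0` is gyr-invariant. -/
def StronglyTop (G : Type u) [Gyrogroup G] [TopologicalSpace G] : Prop :=
  ∃ μ : Set (Set G), IsGyroNhdBase μ

/-- `S` is a suitable set for `G`. -/
def IsSuitable [Gyrogroup G] [TopologicalSpace G] (S : Set G) : Prop :=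
  DiscreteTopology S ∧ IsClosed (S ∪ {(0 : G)}) ∧ Dense (gen S)

end Gyrogroup

open Gyrogroup

section Aux

variable {G : Type u} [Gyrogroup G]

lemma aux_add_def (a b : G) : Gyrogroup.add a b = a + b := rfl
lemma aux_neg_def (a : G) : Gyrogroup.neg a = -a := rfl
lemma aux_zero_def : (Gyrogroup.zero : G) = 0 := rfl

lemma aux_zero_add (a : G) : (0 : G) + a = a := Gyrogroup.zero_add a
lemma aux_add_zero (a : G) : a + (0 : G) = a := Gyrogroup.add_zero a
lemma aux_neg_add (a : G) : -a + a = (0 : G) := Gyrogroup.neg_add a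
lemma aux_add_neg (a : G) : a + -a = (0 : G) := Gyrogroup.add_neg a
lemma aux_left_assoc (x y z : G) : x + (y + z) = (x + y) + gyr x y z :=
  Gyrogroup.left_assoc x y z

lemma aux_add_left_inj (a : G) : Function.Injective (fun x : G => a + x) := by
  intro u v h
  simp only at h
  have hu : -a + (a + u) = gyr (-a) a u := by
    rw [aux_left_assoc, aux_neg_add, aux_zero_add]
  have hv : -a + (a + v) = gyr (-a) a v := by
    rw [aux_left_assoc, aux_neg_add, aux_zero_add]
  have : gyr (-a) a u = gyr (-a) a v := by rw [← hu, ← hv, h]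
  exact (Gyrogroup.gyr_bij (-a) a).1 this

lemma aux_gyr_zero_left (y z : G) : gyr (0 : G) y z = z := by
  have h := aux_left_assoc (0 : G) y z
  rw [aux_zero_add, aux_zero_add] at h
  exact (aux_add_left_inj y h).symm

lemma aux_gyr_neg_self (a z : G) : gyr (-a) a z = z := by
  have h := Gyrogroup.loop (-a) a
  rw [aux_add_def, aux_neg_add] at h
  rw [← h, aux_gyr_zero_left]

lemma aux_left_cancel (a x : G) : -a + (a + x) = x := by
  rw [aux_left_assoc, aux_neg_add, aux_zero_add, aux_gyr_neg_self]

lemma aux_gyr_self (a z : G) : gyr a a z = z := by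
  have h := Gyrogroup.loop (0 : G) a
  rw [aux_add_def, aux_zero_add] at h
  rw [h, aux_gyr_zero_left]

lemma aux_neg_neg (a : G) : -(-a) = a := by
  apply aux_add_left_inj (-a)
  simp only
  rw [aux_add_neg, aux_neg_add]

lemma aux_gyr_eq (a b c : G) : gyr a b c = -(a + b) + (a + (b + c)) := by
  have h := aux_left_assoc a b c
  rw [h, aux_left_cancel]

lemma aux_coadd_eq (x y : G) : coadd x y = x + (-(x + -y) + x) := by
  unfold coadd
  rw [aux_gyr_eq, aux_neg_add, aux_add_zero]

lemma aux_coadd_neg (x : G) : coadd x (-x) = 0 := by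
  unfold coadd
  rw [aux_neg_neg, aux_gyr_self, aux_add_neg]

end Aux

theorem exists_basic_nhd_coadd {G : Type u} [Gyrogroup G] [TopologicalSpace G]
    [TopGyrogroup G] (μ : Set (Set G)) (hμ : IsGyroNhdBase μ)
    (hsym : ∀ U ∈ μ, (fun x : G => -x) '' U = U)
    (U : Set G) (hU : U ∈ μ) (H : Set G) (hH : IsCompact H) :
    ∃ V ∈ μ, ∀ h ∈ H, ∀ v ∈ V, coadd (h + v) (-h) ∈ U := by
  have cadd : Continuous fun p : G × G => p.1 + p.2 := TopGyrogroup.continuous_add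
  have cneg : Continuous fun x : G => -x := TopGyrogroup.continuous_neg
  have cA : ∀ {α : Type u} [TopologicalSpace α] {f g : α → G},
      Continuous f → Continuous g → Continuous fun a => f a + g a := by
    intro α _ f g hf hg
    exact cadd.comp (hf.prodMk hg)
  have cN : ∀ {α : Type u} [TopologicalSpace α] {f : α → G},
      Continuous f → Continuous fun a => -(f a) := by
    intro α _ f hf
    exact cneg.comp hf
  have hfc : Continuous fun p : G × G => coadd (p.1 + p.2) (-p.1) := by
    simp only [aux_coadd_eq]
    have cx : Continuous fun p : G × G => p.1 + p.2 :=
      cA continuous_fst continuous_snd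
    exact cA cx (cA (cN (cA cx (cN (cN continuous_fst)))) cx)
  have key : ∀ h : G, ∃ W ∈ nhds h, ∃ V ∈ nhds (0 : G),
      ∀ a ∈ W, ∀ v ∈ V, coadd (a + v) (-a) ∈ U := by
    intro h
    have h0 : coadd (h + (0 : G)) (-h) = 0 := by
      rw [aux_add_zero, aux_coadd_neg]
    have hmem : (fun p : G × G => coadd (p.1 + p.2) (-p.1)) ⁻¹' U ∈ nhds (h, (0 : G)) := by
      apply hfc.continuousAt.preimage_mem_nhds
      simp only [h0]
      exact hμ.1 U hU
    rcases mem_nhds_prod_iff.1 hmem with ⟨W, hW, V, hV, hWV⟩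
    exact ⟨W, hW, V, hV, fun a ha v hv => hWV (Set.mk_mem_prod ha hv)⟩
  choose W hW V hV hkey using key
  obtain ⟨t, _, hcov⟩ := hH.elim_nhds_subcover W (fun x _ => hW x)
  have hInt : (⋂ x ∈ t, V x) ∈ nhds (0 : G) :=
    (Filter.biInter_mem t.finite_toSet).2 fun x _ => hV x
  obtain ⟨V₀, hV₀μ, hV₀⟩ := hμ.2.1 _ hInt
  refine ⟨V₀, hV₀μ, fun h hh v hv => ?_⟩
  obtain ⟨x, hxt, hxW⟩ := Set.mem_iUnion₂.1 (hcov hh)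
  exact hkey x h hxW v (Set.mem_iInter₂.1 (hV₀ hv) x hxt)
end

section
/- Let G be a σ-compact, locally compact strongly topological gyrogroup and N the compact normal subgyrogroup obtained as N = ⋂ₙ Vₙ from a sequence of invariant symmetric neighborhoods (with V_{n+1} ⊕ V_{n+1} ⊆ Vₙ and {Vₙ} shrinking inside a given countable family of neighborhoods of 0). Then the quotient gyrogroup G/N, with the quotient topology, is a strongly topological gyrogroup that has a countable base (it is separable and metrizable). -/
universe u

open Gyrogroup

/-! Realise `G/N` as `G` modulo the kernel relation of a homomorphism `f` with kernel `N`.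
Since `closure V₀` is compact and `closure Vₙ₊₁ ⊆ Vₙ`, every open set containing `N = ⋂ Vₙ`
contains some `Vₖ`; with openness of the quotient map this makes the images `π(Vₙ)` a
gyr-invariant neighbourhood base at `0`, and more generally `π(y ⊕ Vₙ)` a neighbourhood base at
`π y`. The space `G` is Lindelöf, so for each `m` countably many translates `x ⊕ Vₘ` cover it,
and `y ∈ x ⊕ Vₘ₊₁` forces `x ⊕ Vₘ₊₁ ⊆ y ⊕ Vₘ` (left gyroassociativity); hence the images
`π(x ⊕ Vₘ)` of these translates form a countable base. -/

open Set

namespace Gyrogroup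

variable {G H : Type u} [Gyrogroup G]

section Algebra

theorem zero_add' (a : G) : 0 + a = a := Gyrogroup.zero_add a
theorem add_zero' (a : G) : a + 0 = a := Gyrogroup.add_zero a
theorem neg_add' (a : G) : -a + a = 0 := Gyrogroup.neg_add a
theorem add_neg' (a : G) : a + -a = 0 := Gyrogroup.add_neg a
theorem left_assoc' (a b c : G) : a + (b + c) = (a + b) + gyr a b c := Gyrogroup.left_assoc a b c
theorem loop' (a b : G) : gyr (a + b) b = gyr a b := Gyrogroup.loop a b

theorem neg_add_add_eq_gyr (a x : G) : -a + (a + x) = gyr (-a) a x := by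
  rw [left_assoc', neg_add', zero_add']

theorem add_left_cancel' {a x y : G} (h : a + x = a + y) : x = y :=
  (gyr_bij (-a) a).1 (by rw [← neg_add_add_eq_gyr, ← neg_add_add_eq_gyr, h])

theorem gyr_zero_left_apply (a z : G) : gyr 0 a z = z := by
  have h := left_assoc' (0 : G) a z
  rw [zero_add', zero_add'] at h
  exact (add_left_cancel' h).symm

theorem neg_add_cancel_left' (a x : G) : -a + (a + x) = x := by
  rw [neg_add_add_eq_gyr, ← loop', neg_add', gyr_zero_left_apply]

theorem add_neg_cancel_left' (a x : G) : a + (-a + x) = x := by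
  rw [left_assoc', add_neg', zero_add', ← loop', add_neg', gyr_zero_left_apply]

theorem add_add_gyr_neg (x v : G) : (x + v) + gyr (x + v) v (-v) = x := by
  rw [loop', ← left_assoc', add_neg', add_zero']

theorem eq_neg_of_add_eq_zero' {a b : G} (h : a + b = 0) : b = -a :=
  add_left_cancel' (h.trans (add_neg' a).symm)

theorem gyr_eq_neg_add (a b c : G) : gyr a b c = -(a + b) + (a + (b + c)) := by
  rw [left_assoc' a b c, neg_add_cancel_left']

theorem image_add_left_subset_of_mem {A B : Set G} (hA : ∀ a ∈ A, -a ∈ A)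
    (hAB : image2 (· + ·) A A ⊆ B) (hB : ∀ a b, gyr a b '' B ⊆ B) {x y : G}
    (hy : y ∈ (x + ·) '' A) : (x + ·) '' A ⊆ (y + ·) '' B := by
  obtain ⟨a, ha, rfl⟩ := hy
  rintro _ ⟨v, hv, rfl⟩
  refine ⟨gyr x a (-a + v),
    hB x a (mem_image_of_mem _ (hAB (mem_image2_of_mem (hA a ha) hv))), ?_⟩
  change (x + a) + gyr x a (-a + v) = x + v
  rw [← left_assoc', add_neg_cancel_left']

theorem image_add_left_eq_preimage (a : G) (S : Set G) :
    (a + ·) '' S = (-a + ·) ⁻¹' S := by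
  ext w
  constructor
  · rintro ⟨s, hs, rfl⟩
    simpa only [mem_preimage, neg_add_cancel_left'] using hs
  · exact fun hw => ⟨-a + w, hw, add_neg_cancel_left' a w⟩

section Hom

variable [Gyrogroup H] {f : G → H} (hf : ∀ a b, f (a + b) = f a + f b)
include hf

theorem map_zero' : f 0 = 0 :=
  add_left_cancel' (by rw [← hf, zero_add', add_zero'])

theorem map_neg' (a : G) : f (-a) = -f a :=
  eq_neg_of_add_eq_zero' (by rw [← hf, add_neg', map_zero' hf])

theorem map_gyr' (a b c : G) : f (gyr a b c) = gyr (f a) (f b) (f c) := by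
  rw [gyr_eq_neg_add, gyr_eq_neg_add (f a), hf, hf, hf, map_neg' hf, hf]

theorem map_eq_map_iff {a b : G} : f a = f b ↔ ∃ n, f n = 0 ∧ a + n = b :=
  ⟨fun h => ⟨-a + b, by rw [hf, map_neg' hf, h, neg_add'], add_neg_cancel_left' a b⟩,
    by rintro ⟨n, hn, rfl⟩; rw [hf, hn, add_zero']⟩

abbrev kerQuotient : Gyrogroup (Quotient (Setoid.ker f)) where
  add := Quotient.map₂ (· + ·) fun a a' (ha : f a = f a') b b' (hb : f b = f b') =>
    show f (a + b) = f (a' + b') by rw [hf, hf, ha, hb]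
  zero := Quotient.mk _ 0
  neg := Quotient.map (-·) fun a a' (ha : f a = f a') =>
    show f (-a) = f (-a') by rw [map_neg' hf, map_neg' hf, ha]
  gyr := Quotient.lift₂
    (fun a b => Quotient.map (gyr a b) fun c c' (hc : f c = f c') =>
      show f (gyr a b c) = f (gyr a b c') by rw [map_gyr' hf, map_gyr' hf, hc])
    fun a b a' b' (ha : f a = f a') (hb : f b = f b') => funext <| Quotient.ind fun c =>
      Quotient.sound <| show f (gyr a b c) = f (gyr a' b' c) by
        rw [map_gyr' hf, map_gyr' hf, ha, hb]
  zero_add := Quotient.ind fun a => congrArg _ (zero_add a)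
  add_zero := Quotient.ind fun a => congrArg _ (add_zero a)
  neg_add := Quotient.ind fun a => congrArg _ (neg_add a)
  add_neg := Quotient.ind fun a => congrArg _ (add_neg a)
  gyr_bij := by
    refine Quotient.ind₂ fun a b => ⟨fun p q => ?_, Quotient.ind fun c => ?_⟩
    · induction p, q using Quotient.inductionOn₂ with
      | _ c c' =>
        intro h
        have h' : f (gyr a b c) = f (gyr a b c') := Quotient.exact h
        rw [map_gyr' hf, map_gyr' hf] at h'
        exact Quotient.sound ((gyr_bij (f a) (f b)).1 h')
    · obtain ⟨c', hc'⟩ := (gyr_bij a b).2 c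
      exact ⟨Quotient.mk _ c', congrArg _ hc'⟩
  gyr_add := Quotient.ind₂ fun a b => Quotient.ind₂ fun c d => congrArg _ (gyr_add a b c d)
  left_assoc := Quotient.ind fun a => Quotient.ind₂ fun b c => congrArg _ (left_assoc a b c)
  loop := Quotient.ind₂ fun a b => funext <| Quotient.ind fun c =>
    congrArg _ (congrFun (loop a b) c)

theorem quotient_mk_preimage_zero :
    Quotient.mk (Setoid.ker f) ⁻¹' {Quotient.mk _ 0} = f ⁻¹' {0} := by
  ext z
  simp only [mem_preimage, mem_singleton_iff, Quotient.eq, Setoid.ker_def, map_zero' hf]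

end Hom

end Algebra

section Topological

variable [TopologicalSpace G]

structure IsInvariantNhdSeq (V : ℕ → Set G) : Prop where
  isOpen : ∀ n, IsOpen (V n)
  zero_mem : ∀ n, (0 : G) ∈ V n
  neg_image : ∀ n, (fun x : G => -x) '' V n = V n
  image2_add_subset : ∀ n, image2 (· + ·) (V (n + 1)) (V (n + 1)) ⊆ V n
  gyr_image : ∀ n, ∀ x y : G, gyr x y '' V n = V n

namespace IsInvariantNhdSeq

variable {V : ℕ → Set G} (hV : IsInvariantNhdSeq V)
include hV

theorem neg_mem {n : ℕ} {a : G} (ha : a ∈ V n) : -a ∈ V n :=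
  hV.neg_image n ▸ mem_image_of_mem _ ha

theorem antitone : Antitone V :=
  antitone_nat_of_succ_le fun n v hv => by
    simpa only [add_zero'] using hV.image2_add_subset n (mem_image2_of_mem hv (hV.zero_mem _))

theorem image_add_left_subset_of_mem {n : ℕ} {x y : G} (hy : y ∈ (x + ·) '' V (n + 1)) :
    (x + ·) '' V (n + 1) ⊆ (y + ·) '' V n :=
  Gyrogroup.image_add_left_subset_of_mem (fun _ => hV.neg_mem) (hV.image2_add_subset n)
    (fun a b => (hV.gyr_image n a b).subset) hy

end IsInvariantNhdSeq

variable [TopGyrogroup G]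

theorem continuous_add_left' (a : G) : Continuous (a + ·) :=
  TopGyrogroup.continuous_add.comp (continuous_const.prodMk continuous_id)

theorem continuous_add_right' (a : G) : Continuous (· + a) :=
  TopGyrogroup.continuous_add.comp (continuous_id.prodMk continuous_const)

theorem isOpenMap_add_left (a : G) : IsOpenMap (a + ·) := fun S hS => by
  rw [image_add_left_eq_preimage]
  exact hS.preimage (continuous_add_left' (-a))

theorem closure_subset_image2_add {W : Set G} (hW : IsOpen W) (h0 : (0 : G) ∈ W)
    (hneg : ∀ a ∈ W, -a ∈ W) (hgyr : ∀ a b, gyr a b '' W ⊆ W) :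
    closure W ⊆ image2 (· + ·) W W := by
  intro x hx
  obtain ⟨_, ⟨w, hw, rfl⟩, hxw⟩ :=
    mem_closure_iff.mp hx _ (isOpenMap_add_left x W hW) ⟨0, h0, add_zero' x⟩
  exact ⟨x + w, hxw, _, hgyr _ _ (mem_image_of_mem _ (hneg w hw)), add_add_gyr_neg x w⟩

namespace IsInvariantNhdSeq

variable {V : ℕ → Set G} (hV : IsInvariantNhdSeq V)
include hV

theorem closure_succ_subset (n : ℕ) : closure (V (n + 1)) ⊆ V n :=
  (closure_subset_image2_add (hV.isOpen _) (hV.zero_mem _) (fun _ => hV.neg_mem)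
    fun a b => (hV.gyr_image _ a b).subset).trans (hV.image2_add_subset n)

theorem exists_subset_of_iInter_subset (hc : IsCompact (closure (V 0))) {O : Set G}
    (hO : IsOpen O) (hVO : ⋂ n, V n ⊆ O) : ∃ k, V k ⊆ O := by
  have hanti : Antitone fun n => closure (V (n + 1)) :=
    fun m n h => closure_mono (hV.antitone (Nat.succ_le_succ h))
  obtain ⟨k, hk⟩ := exists_subset_nhds_of_isCompact' hanti.directed_ge
    (fun n => hc.of_isClosed_subset isClosed_closure (closure_mono (hV.antitone (Nat.zero_le _))))
    (fun _ => isClosed_closure) fun x hx =>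
      hO.mem_nhds (hVO (mem_iInter.2 fun n => hV.closure_succ_subset n (mem_iInter.1 hx n)))
  exact ⟨k + 1, subset_closure.trans hk⟩

end IsInvariantNhdSeq

section Quotient

variable [Gyrogroup H] {f : G → H}
variable (hf : ∀ a b, f (a + b) = f a + f b)
include hf

theorem isOpenMap_quotient_mk : IsOpenMap (Quotient.mk (Setoid.ker f)) := by
  intro O hO
  have hsat : Quotient.mk (Setoid.ker f) ⁻¹' (Quotient.mk _ '' O) =
      ⋃ n ∈ f ⁻¹' {0}, (· + n) ⁻¹' O := by
    ext z
    simp only [mem_preimage, mem_image, Quotient.eq, Setoid.ker_def, mem_iUnion,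
      mem_singleton_iff, exists_prop]
    constructor
    · rintro ⟨o, ho, hoz⟩
      obtain ⟨n, hn, rfl⟩ := (map_eq_map_iff hf).1 hoz.symm
      exact ⟨n, hn, ho⟩
    · rintro ⟨n, hn, ho⟩
      exact ⟨_, ho, ((map_eq_map_iff hf).2 ⟨n, hn, rfl⟩).symm⟩
  rw [← isQuotientMap_quotient_mk'.isOpen_preimage]
  change IsOpen (Quotient.mk (Setoid.ker f) ⁻¹' (Quotient.mk _ '' O))
  rw [hsat]
  exact isOpen_biUnion fun n _ => hO.preimage (continuous_add_right' n)

variable {V : ℕ → Set G} (hV : IsInvariantNhdSeq V) (hc : IsCompact (closure (V 0)))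
  (hker : ⋂ n, V n ⊆ f ⁻¹' {0})
include hV hc hker

theorem exists_image_add_left_subset {W : Set (Quotient (Setoid.ker f))} (hW : IsOpen W) {y : G}
    (hy : Quotient.mk _ y ∈ W) : ∃ k, Quotient.mk _ '' ((y + ·) '' V k) ⊆ W := by
  have hO : IsOpen ((y + ·) ⁻¹' (Quotient.mk _ ⁻¹' W)) :=
    (hW.preimage continuous_quotient_mk').preimage (continuous_add_left' y)
  obtain ⟨k, hk⟩ := hV.exists_subset_of_iInter_subset hc hO fun n hn => by
    have : Quotient.mk (Setoid.ker f) (y + n) = Quotient.mk _ y :=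
      Quotient.sound (show f (y + n) = f y by rw [hf, hker hn, add_zero'])
    simpa only [mem_preimage, this] using hy
  exact ⟨k, image_subset_iff.2 (image_subset_iff.2 hk)⟩

theorem stronglyTop_quotient : @StronglyTop _ (kerQuotient hf) _ := by
  let := kerQuotient hf
  refine ⟨range fun n => Quotient.mk _ '' V n, ?_, fun W hW => ?_, ?_⟩
  · rintro _ ⟨n, rfl⟩
    exact (isOpenMap_quotient_mk hf _ (hV.isOpen n)).mem_nhds ⟨0, hV.zero_mem n, rfl⟩
  · obtain ⟨k, hk⟩ := exists_image_add_left_subset hf hV hc hker isOpen_interior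
      (y := 0) (mem_interior_iff_mem_nhds.2 hW)
    refine ⟨_, ⟨k, rfl⟩, ?_⟩
    simpa only [zero_add', image_id'] using hk.trans interior_subset
  · rintro _ ⟨n, rfl⟩ p q
    induction p, q using Quotient.inductionOn₂ with
    | _ a b =>
      dsimp only
      rw [image_image]
      change (fun c => Quotient.mk (Setoid.ker f) (gyr a b c)) '' V n = _
      rw [← image_image, hV.gyr_image]

theorem secondCountableTopology_quotient [LindelofSpace G] :
    SecondCountableTopology (Quotient (Setoid.ker f)) := by
  choose D hD using fun m => countable_cover_nhds fun x : G =>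
    (isOpenMap_add_left x _ (hV.isOpen m)).mem_nhds ⟨0, hV.zero_mem m, add_zero' x⟩
  let B : ℕ → G → Set (Quotient (Setoid.ker f)) := fun m x => Quotient.mk _ '' ((x + ·) '' V m)
  refine (TopologicalSpace.isTopologicalBasis_of_isOpen_of_nhds (s := ⋃ m, B m '' D m) ?_ ?_)
    |>.secondCountableTopology (countable_iUnion fun m => (hD m).1.image _)
  · simp only [mem_iUnion, mem_image]
    rintro _ ⟨m, x, -, rfl⟩
    exact isOpenMap_quotient_mk hf _ (isOpenMap_add_left x _ (hV.isOpen m))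
  · intro q W hqW hW
    induction q using Quotient.inductionOn with
    | _ y =>
      obtain ⟨k, hk⟩ := exists_image_add_left_subset hf hV hc hker hW hqW
      obtain ⟨x, hxD, hyx⟩ : ∃ x ∈ D (k + 1), y ∈ (x + ·) '' V (k + 1) := by
        simpa only [mem_iUnion, exists_prop] using (hD (k + 1)).2.ge (mem_univ y)
      exact ⟨B (k + 1) x, mem_iUnion.2 ⟨k + 1, x, hxD, rfl⟩, mem_image_of_mem _ hyx,
        (image_mono (hV.image_add_left_subset_of_mem hyx)).trans hk⟩

end Quotient

end Topological

end Gyrogroup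

theorem quotient_secondCountable_general {G : Type u} [Gyrogroup G] [TopologicalSpace G]
    [TopGyrogroup G] [SigmaCompactSpace G]
    (U : ℕ → Set G)
    (V : ℕ → Set G)
    (hV : ∀ n, IsOpen (V n) ∧ (0 : G) ∈ V n ∧ (fun x : G => -x) '' V n = V n)
    (hV0 : IsCompact (closure (V 0)))
    (hVU : ∀ n, Set.image2 (· + ·) (V (n + 1)) (V (n + 1)) ⊆ V n ∩ U n)
    (hgyr : ∀ n, ∀ x y : G, gyr x y '' V n = V n)
    (N : Set G) (hN : N = ⋂ n, V n)
    (hNn : IsNormalSubgyro N) :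
    ∃ (Q : Type u) (iQ : Gyrogroup Q) (tQ : TopologicalSpace Q) (π : G → Q),
      (∀ a b : G, π (a + b) = iQ.add (π a) (π b)) ∧ Function.Surjective π ∧
      (@Topology.IsQuotientMap G Q _ tQ π) ∧ π ⁻¹' {iQ.zero} = N ∧
      (@StronglyTop Q iQ tQ) ∧ (@SecondCountableTopology Q tQ) := by
  obtain ⟨H, i, f, hf, rfl⟩ := hNn
  have hVseq : IsInvariantNhdSeq V := ⟨fun n => (hV n).1, fun n => (hV n).2.1,
    fun n => (hV n).2.2, fun n => (hVU n).trans inter_subset_left, hgyr⟩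
  exact ⟨_, kerQuotient hf, inferInstance, Quotient.mk _, fun _ _ => rfl, Quotient.mk_surjective,
    isQuotientMap_quotient_mk', quotient_mk_preimage_zero hf,
    stronglyTop_quotient hf hVseq hV0 hN.ge, secondCountableTopology_quotient hf hVseq hV0 hN.ge⟩

theorem quotient_secondCountable {G : Type u} [Gyrogroup G] [TopologicalSpace G]
    [TopGyrogroup G] [SigmaCompactSpace G] [LocallyCompactSpace G]
    (hst : StronglyTop G) (U : ℕ → Set G) (hU : ∀ n, U n ∈ nhds (0 : G))
    (V : ℕ → Set G)
    (hV : ∀ n, IsOpen (V n) ∧ (0 : G) ∈ V n ∧ (fun x : G => -x) '' V n = V n)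
    (hV0 : IsCompact (closure (V 0)))
    (hVU : ∀ n, Set.image2 (· + ·) (V (n + 1)) (V (n + 1)) ⊆ V n ∩ U n)
    (hgyr : ∀ n, ∀ x y : G, gyr x y '' V n = V n)
    (N : Set G) (hN : N = ⋂ n, V n)
    (hNc : IsCompact N) (hNn : IsNormalSubgyro N) :
    ∃ (Q : Type u) (iQ : Gyrogroup Q) (tQ : TopologicalSpace Q) (π : G → Q),
      (∀ a b : G, π (a + b) = iQ.add (π a) (π b)) ∧ Function.Surjective π ∧
      (@Topology.IsQuotientMap G Q _ tQ π) ∧ π ⁻¹' {iQ.zero} = N ∧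
      (@StronglyTop Q iQ tQ) ∧ (@SecondCountableTopology Q tQ) :=
  quotient_secondCountable_general U V hV hV0 hVU hgyr N hN hNn
end

section
/- Let G be a σ-compact locally compact strongly topological gyrogroup, {Vₙ} a decreasing sequence of symmetric gyr-invariant open neighborhoods of 0 with compact closure of V₀ and V_{n+1} ⊕ V_{n+1} ⊆ Vₙ, and N = ⋂ₙ Vₙ. Then for every open neighborhood W of 0 in G there exists n₀ ∈ ω with V_{n₀} ⊆ W ⊕ N; consequently {π(Vₙ) : n ∈ ω} is a countable base at the identity of G/N, where π : G → G/N is the quotient map. -/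
universe u

open Gyrogroup

namespace GyroAux

variable {G : Type u} [Gyrogroup G]

theorem gy_zero_add (a : G) : 0 + a = a := Gyrogroup.zero_add a
theorem gy_add_zero (a : G) : a + 0 = a := Gyrogroup.add_zero a
theorem gy_neg_add (a : G) : -a + a = 0 := Gyrogroup.neg_add a
theorem gy_add_neg (a : G) : a + -a = 0 := Gyrogroup.add_neg a
theorem gy_left_assoc (x y z : G) : x + (y + z) = (x + y) + gyr x y z :=
  Gyrogroup.left_assoc x y z

theorem add_left_cancel' (a : G) {b c : G} (h : a + b = a + c) : b = c := by
  have hb := gy_left_assoc (-a) a b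
  have hc := gy_left_assoc (-a) a c
  rw [gy_neg_add, gy_zero_add] at hb hc
  have : gyr (-a) a b = gyr (-a) a c := by
    rw [← hb, ← hc, h]
  exact (Gyrogroup.gyr_bij (-a) a).1 this

theorem gyr_zero_left (a z : G) : gyr (0 : G) a z = z := by
  have h := gy_left_assoc (0 : G) a z
  rw [gy_zero_add, gy_zero_add] at h
  exact (add_left_cancel' a h).symm

theorem neg_add_cancel_left (a b : G) : -a + (a + b) = b := by
  have h := gy_left_assoc (-a) a b
  rw [gy_neg_add, gy_zero_add] at h
  have hl := Gyrogroup.loop (-a) a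
  have hadd : Gyrogroup.add (-a) a = (0 : G) := gy_neg_add a
  rw [hadd] at hl
  rw [h, ← hl]
  exact gyr_zero_left a b

theorem gyr_self_neg (a z : G) : gyr a (-a) z = z := by
  have hl := Gyrogroup.loop a (-a)
  have hadd : Gyrogroup.add a (-a) = (0 : G) := gy_add_neg a
  rw [hadd] at hl
  rw [← hl]
  exact gyr_zero_left (-a) z

theorem add_neg_cancel_left (a b : G) : a + (-a + b) = b := by
  have h := gy_left_assoc a (-a) b
  rw [gy_add_neg, gy_zero_add, gyr_self_neg] at h
  exact h

theorem neg_neg' (a : G) : -(-a) = a := by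
  apply add_left_cancel' (-a)
  rw [gy_add_neg, gy_neg_add]

theorem eq_neg_of_add_eq_zero {a b : G} (h : a + b = 0) : b = -a :=
  add_left_cancel' a (by rw [h, gy_add_neg])

section Top

variable [TopologicalSpace G] [TopGyrogroup G]

theorem continuous_ladd (a : G) : Continuous fun z : G => a + z :=
  TopGyrogroup.continuous_add.comp (continuous_const.prodMk continuous_id)

theorem ladd_image (a : G) (U : Set G) :
    (fun u : G => a + u) '' U = (fun z : G => -a + z) ⁻¹' U := by
  ext z
  constructor
  · rintro ⟨u, hu, rfl⟩
    show -a + (a + u) ∈ U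
    rwa [neg_add_cancel_left]
  · intro hz
    exact ⟨-a + z, hz, add_neg_cancel_left a z⟩

theorem isOpen_ladd_image (a : G) {U : Set G} (hU : IsOpen U) :
    IsOpen ((fun u : G => a + u) '' U) := by
  rw [ladd_image]
  exact hU.preimage (continuous_ladd (-a))

/-- If `U` is an open symmetric gyr-invariant neighborhood of `0`, then
`closure U ⊆ U ⊕ U`. -/
theorem closure_subset_add (U : Set G) (hUo : IsOpen U) (hU0 : (0 : G) ∈ U)
    (hUs : (fun x : G => -x) '' U = U) (hUg : ∀ x y : G, gyr x y '' U = U) :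
    closure U ⊆ Set.image2 (· + ·) U U := by
  intro x hx
  have hopen : IsOpen ((fun u : G => x + u) '' U) := isOpen_ladd_image x hUo
  have hxmem : x ∈ (fun u : G => x + u) '' U := ⟨0, hU0, gy_add_zero x⟩
  obtain ⟨v, hvim, hvU⟩ :=
    (mem_closure_iff.1 hx) _ hopen hxmem
  obtain ⟨u, hu, rfl⟩ := hvim
  -- v = x + u ∈ U, u ∈ U
  have hnu : -u ∈ U := by
    rw [← hUs]; exact ⟨u, hu, rfl⟩
  have hw : gyr x u (-u) ∈ U := by
    rw [← hUg x u]; exact ⟨-u, hnu, rfl⟩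
  have hxeq : x = (x + u) + gyr x u (-u) := by
    have h := gy_left_assoc x u (-u)
    rw [gy_add_neg, gy_add_zero] at h
    exact h
  rw [hxeq]
  exact Set.mem_image2_of_mem hvU hw

end Top

end GyroAux

open GyroAux in
theorem quotient_countable_base_at_identity {G : Type u} [Gyrogroup G] [TopologicalSpace G]
    [TopGyrogroup G] [SigmaCompactSpace G] [LocallyCompactSpace G]
    (hst : StronglyTop G) (V : ℕ → Set G)
    (hV : ∀ n, IsOpen (V n) ∧ (0 : G) ∈ V n ∧ (fun x : G => -x) '' V n = V n)
    (hgyr : ∀ n, ∀ x y : G, gyr x y '' V n = V n)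
    (hdec : ∀ n, V (n + 1) ⊆ V n) (hV0 : IsCompact (closure (V 0)))
    (hVV : ∀ n, Set.image2 (· + ·) (V (n + 1)) (V (n + 1)) ⊆ V n)
    (N : Set G) (hN : N = ⋂ n, V n)
    (hNc : IsCompact N) (hNn : IsNormalSubgyro N)
    (Q : Type u) [Gyrogroup Q] [TopologicalSpace Q] (π : G → Q)
    (hhom : ∀ a b : G, π (a + b) = π a + π b) (hsurj : Function.Surjective π)
    (hquot : Topology.IsQuotientMap π) (hopen : IsOpenMap π)
    (hker : π ⁻¹' {(0 : Q)} = N) :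
    (∀ W : Set G, IsOpen W → (0 : G) ∈ W →
        ∃ n₀ : ℕ, V n₀ ⊆ Set.image2 (· + ·) W N) ∧
      (nhds (0 : Q)).HasBasis (fun _ : ℕ => True) (fun n => π '' V n) := by
  -- basic facts about π
  have hπ0 : π (0 : G) = (0 : Q) := by
    have h := hhom 0 0
    rw [gy_zero_add (0 : G)] at h
    have h2 : π 0 + π 0 = π 0 + 0 := by rw [← h, gy_add_zero]
    exact add_left_cancel' (π 0) h2
  have hπneg : ∀ a : G, π (-a) = -(π a) := by
    intro a
    apply eq_neg_of_add_eq_zero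
    rw [← hhom, gy_add_neg, hπ0]
  have hmemN : ∀ x : G, x ∈ N ↔ π x = 0 := by
    intro x
    rw [← hker]
    exact Iff.rfl
  -- W ⊕ N = π⁻¹(π '' W)
  have hWN : ∀ W : Set G, Set.image2 (· + ·) W N = π ⁻¹' (π '' W) := by
    intro W
    ext x
    constructor
    · rintro ⟨w, hw, n, hn, rfl⟩
      have hπn : π n = 0 := (hmemN n).1 hn
      show π (w + n) ∈ π '' W
      rw [hhom, hπn, gy_add_zero]
      exact ⟨w, hw, rfl⟩
    · rintro ⟨w, hw, hwx⟩
      refine ⟨w, hw, -w + x, ?_, add_neg_cancel_left w x⟩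
      rw [hmemN, hhom, hπneg, hwx, gy_neg_add]
  -- monotonicity of V
  have hdec' : ∀ m n : ℕ, m ≤ n → V n ⊆ V m := by
    intro m n h
    induction h with
    | refl => exact subset_rfl
    | step h ih => exact fun x hx => ih (hdec _ hx)
  have hclcompact : ∀ n, IsCompact (closure (V n)) := fun n =>
    hV0.of_isClosed_subset isClosed_closure (closure_mono (hdec' 0 n (Nat.zero_le n)))
  have hclsub : ∀ n, closure (V (n + 1)) ⊆ V n := fun n =>
    (closure_subset_add (V (n + 1)) (hV (n + 1)).1 (hV (n + 1)).2.1 (hV (n + 1)).2.2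
      (hgyr (n + 1))).trans (hVV n)
  -- part 1
  have key : ∀ W : Set G, IsOpen W → (0 : G) ∈ W →
      ∃ n₀ : ℕ, V n₀ ⊆ Set.image2 (· + ·) W N := by
    intro W hWo hW0
    by_contra hcon
    push_neg at hcon
    set M := Set.image2 (· + ·) W N with hM
    have hMopen : IsOpen M := by
      rw [hM, hWN]
      exact (hopen W hWo).preimage hquot.continuous
    set F : ℕ → Set G := fun n => closure (V (n + 1)) \ M with hF
    have hFclosed : ∀ n, IsClosed (F n) := fun n =>
      isClosed_closure.sdiff hMopen
    have hFcompact : ∀ n, IsCompact (F n) := fun n =>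
      (hclcompact (n + 1)).of_isClosed_subset (hFclosed n) Set.diff_subset
    have hFne : ∀ n, (F n).Nonempty := by
      intro n
      obtain ⟨x, hx1, hx2⟩ := (Set.not_subset).1 (hcon (n + 1))
      exact ⟨x, subset_closure hx1, hx2⟩
    have hFanti : ∀ m n : ℕ, m ≤ n → F n ⊆ F m := by
      intro m n h
      exact Set.diff_subset_diff_left
        (closure_mono (hdec' (m + 1) (n + 1) (Nat.succ_le_succ h)))
    have hFdir : Directed (· ⊇ ·) F := fun m n =>
      ⟨max m n, hFanti m (max m n) (le_max_left m n),
        hFanti n (max m n) (le_max_right m n)⟩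
    obtain ⟨x, hx⟩ :=
      IsCompact.nonempty_iInter_of_directed_nonempty_isCompact_isClosed F hFdir hFne
        hFcompact hFclosed
    have hxN : x ∈ N := by
      rw [hN]
      exact Set.mem_iInter.2 fun n => hclsub n (Set.mem_iInter.1 hx n).1
    have hxM : x ∈ M := ⟨0, hW0, x, hxN, gy_zero_add x⟩
    exact (Set.mem_iInter.1 hx 0).2 hxM
  refine ⟨key, ?_⟩
  constructor
  intro t
  constructor
  · intro ht
    have h0t : (0 : Q) ∈ t := mem_of_mem_nhds ht
    have hpre : π ⁻¹' t ∈ nhds (0 : G) := by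
      have := hquot.continuous.continuousAt (x := (0 : G))
      rw [ContinuousAt, hπ0] at this
      exact this ht
    set W := interior (π ⁻¹' t) with hWdef
    have hW0 : (0 : G) ∈ W := mem_interior_iff_mem_nhds.2 hpre
    obtain ⟨n, hn⟩ := key W isOpen_interior hW0
    refine ⟨n, trivial, ?_⟩
    intro q hq
    obtain ⟨x, hxV, rfl⟩ := hq
    have hx : x ∈ π ⁻¹' (π '' W) := by
      rw [← hWN]
      exact hn hxV
    obtain ⟨w, hw, hwx⟩ := hx
    rw [← hwx]
    exact interior_subset (s := π ⁻¹' t) hw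
  · rintro ⟨n, -, hsub⟩
    have hopenVn : IsOpen (π '' V n) := hopen _ (hV n).1
    exact Filter.mem_of_superset (hopenVn.mem_nhds ⟨0, (hV n).2.1, hπ0⟩) hsub
end
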